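/- arXiv:cs/0012010 — 6 statements merged into one kernel-verified Lean document; each statement's English description precedes it below -/
import Mathlib

section
/- Let (D, ⊑) be a finite partial ordering with least element ⊥ and F a finite set of monotonic and inflationary functions on D. Then the least common fixpoint of the functions from F exists and can be computed by any fair application strategy; formally, there exists a finite sequence of applications of functions from F starting at ⊥ whose final value d satisfies f(d) = d for all f ∈ F, and this d is ⊑-below every common fixpoint of F. -/
/-- On a finite partial order with least element `⊥`, for a finite set of monotonic
and inflationary functions, there is a finite sequence of applications of the
functions starting at `⊥` whose final value is a common fixpoint below every
common fixpoint, i.e. the least common fixpoint. -/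
theorem least_common_fixpoint_reachable {D : Type*} [PartialOrder D] [OrderBot D]
    [Finite D] {ι : Type*} [Finite ι] (f : ι → D → D)
    (hinfl : ∀ i x, x ≤ f i x) (hmono : ∀ i, Monotone (f i)) :
    ∃ (d : D) (m : ℕ) (c : ℕ → D), c 0 = ⊥ ∧
      (∀ j < m, ∃ i, c (j + 1) = f i (c j)) ∧ c m = d ∧
      (∀ i, f i d = d) ∧ (∀ e, (∀ i, f i e = e) → d ≤ e) := by
  have key : ∀ x : D, (∀ e, (∀ i, f i e = e) → x ≤ e) →
      ∃ (d : D) (m : ℕ) (c : ℕ → D), c 0 = x ∧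
        (∀ j < m, ∃ i, c (j + 1) = f i (c j)) ∧ c m = d ∧
        (∀ i, f i d = d) ∧ (∀ e, (∀ i, f i e = e) → d ≤ e) := by
    intro x
    induction x using WellFoundedGT.induction with
    | _ x ih =>
      intro hx
      by_cases hfix : ∀ i, f i x = x
      · exact ⟨x, 0, fun _ => x, rfl, fun j hj => absurd hj (Nat.not_lt_zero j), rfl, hfix, hx⟩
      · push_neg at hfix
        obtain ⟨i, hi⟩ := hfix
        have hlt : x < f i x := lt_of_le_of_ne (hinfl i x) (Ne.symm hi)
        have hle : ∀ e, (∀ i, f i e = e) → f i x ≤ e := by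
          intro e he
          calc f i x ≤ f i e := hmono i (hx e he)
            _ = e := he i
        obtain ⟨d, m, c, hc0, hstep, hcm, hdfix, hdle⟩ := ih (f i x) hlt hle
        refine ⟨d, m + 1, fun j => Nat.rec x (fun j _ => c j) j, rfl, ?_, hcm, hdfix, hdle⟩
        intro j hj
        cases j with
        | zero => exact ⟨i, hc0⟩
        | succ j => exact hstep j (Nat.lt_of_succ_lt_succ hj)
  exact key ⊥ (fun e _ => bot_le)
end

section
/- Let (D, ⊑) be a partial ordering with least element ⊥ and let f₁,…,f_k be closures on D (inflationary, monotonic, idempotent functions). Suppose f_i semi-commutes with f_j for all i > j, i.e., f_i(f_j(x)) ⊑ f_j(f_i(x)) for all x whenever i > j. Then f₁ f₂ ⋯ f_k(⊥) is the least common fixpoint of the functions f₁,…,f_k. -/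
private theorem sil_aux_fix {D : Type*} [PartialOrder D] [OrderBot D] : ∀ {k : ℕ}
    (f : Fin k → D → D),
    (∀ i x, x ≤ f i x) → (∀ i, Monotone (f i)) →
    (∀ i x, f i (f i x) = f i x) →
    (∀ i j : Fin k, j < i → ∀ x, f i (f j x) ≤ f j (f i x)) →
    ∀ i, f i ((List.ofFn f).foldr (fun g x => g x) ⊥) =
        (List.ofFn f).foldr (fun g x => g x) ⊥
  | 0, _, _, _, _, _, i => i.elim0
  | k+1, f, hinfl, hmono, hidem, hsemi, i => by
    have key := sil_aux_fix (fun j => f j.succ) (fun j x => hinfl j.succ x)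
      (fun j => hmono j.succ) (fun j x => hidem j.succ x)
      (fun a b h x => hsemi a.succ b.succ (by simpa using h) x)
    rw [List.ofFn_succ]
    simp only [List.foldr_cons]
    set C := (List.ofFn fun j : Fin k => f j.succ).foldr (fun g x => g x) ⊥ with hC
    induction i using Fin.cases with
    | zero => exact hidem 0 C
    | succ j =>
      refine le_antisymm ?_ (hinfl _ _)
      calc f j.succ (f 0 C) ≤ f 0 (f j.succ C) :=
            hsemi j.succ 0 (Fin.succ_pos j) C
        _ = f 0 C := congrArg (f 0) (key j)

private theorem sil_aux_le {D : Type*} [PartialOrder D] [OrderBot D] : ∀ {k : ℕ}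
    (f : Fin k → D → D), (∀ i, Monotone (f i)) →
    ∀ e, (∀ i, f i e = e) → (List.ofFn f).foldr (fun g x => g x) ⊥ ≤ e
  | 0, _, _, e, _ => by simp
  | k+1, f, hmono, e, he => by
    rw [List.ofFn_succ]
    simp only [List.foldr_cons]
    have := sil_aux_le (fun j => f j.succ) (fun j => hmono j.succ) e
      (fun j => he j.succ)
    calc f 0 ((List.ofFn fun j : Fin k => f j.succ).foldr (fun g x => g x) ⊥)
        ≤ f 0 e := hmono 0 this
      _ = e := he 0

/-- Simple Iteration Lemma: if `f 0, …, f (k-1)` are closures (inflationary,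
monotonic, idempotent) on a partial order with least element `⊥` and `f i`
semi-commutes with `f j` whenever `j < i`, then `f 0 (f 1 (… f (k-1) ⊥))` is the
least common fixpoint of the functions. -/
theorem simple_iteration_lemma {D : Type*} [PartialOrder D] [OrderBot D] {k : ℕ}
    (f : Fin k → D → D)
    (hinfl : ∀ i x, x ≤ f i x) (hmono : ∀ i, Monotone (f i))
    (hidem : ∀ i x, f i (f i x) = f i x)
    (hsemi : ∀ i j : Fin k, j < i → ∀ x, f i (f j x) ≤ f j (f i x)) :
    (∀ i, f i ((List.ofFn f).foldr (fun g x => g x) ⊥) =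
        (List.ofFn f).foldr (fun g x => g x) ⊥) ∧
    (∀ e, (∀ i, f i e = e) → (List.ofFn f).foldr (fun g x => g x) ⊥ ≤ e) := by
  exact ⟨sil_aux_fix f hinfl hmono hidem hsemi, sil_aux_le f hmono⟩
end

section
/- Under the hypotheses of the Simple Iteration Lemma (f₁,…,f_k closures on (D,⊑) with f_i semi-commuting with f_j for i > j), for every i ∈ [1..k] we have f_i(f₁ f₂ ⋯ f_k(⊥)) = f₁ f₂ ⋯ f_k(⊥), i.e., f₁ f₂ ⋯ f_k(⊥) is a common fixpoint of all the f_i. -/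
private def sufFold {D : Type*} [PartialOrder D] [OrderBot D] {k : ℕ} (f : Fin k → D → D) (j : ℕ) : D :=
  if h : j < k then f ⟨j, h⟩ (sufFold f (j + 1)) else ⊥
termination_by k - j

private lemma sufFold_eq_foldr {D : Type*} [PartialOrder D] [OrderBot D] {k : ℕ} (f : Fin k → D → D) :
    ∀ j, ((List.ofFn f).drop j).foldr (fun g x => g x) ⊥ = sufFold f j := by
  suffices h : ∀ n j, k - j = n →
      ((List.ofFn f).drop j).foldr (fun g x => g x) ⊥ = sufFold f j by
    intro j; exact h _ j rfl
  intro n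
  induction n using Nat.strong_induction_on with
  | _ n ih =>
    intro j hn
    rw [sufFold]
    by_cases h : j < k
    · rw [List.drop_eq_getElem_cons (by simpa using h)]
      simp only [List.foldr_cons, List.getElem_ofFn]
      rw [ih (k - (j + 1)) (by omega) (j + 1) rfl]
      rw [dif_pos h]
    · rw [List.drop_eq_nil_of_le (by simpa using not_lt.mp h)]
      simp [h]

private lemma sufFold_key {D : Type*} [PartialOrder D] [OrderBot D]
    {k : ℕ} (f : Fin k → D → D)
    (hmono : ∀ i, Monotone (f i))
    (hidem : ∀ i x, f i (f i x) = f i x)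
    (hsemi : ∀ i j : Fin k, j < i → ∀ x, f i (f j x) ≤ f j (f i x)) :
    ∀ n (j : ℕ) (i : Fin k), j ≤ i → (i : ℕ) - j = n →
      f i (sufFold f j) ≤ sufFold f j := by
  intro n
  induction n with
  | zero =>
    intro j i hji hn
    have hj : (j : ℕ) = i := by omega
    subst hj
    rw [sufFold, dif_pos i.isLt]
    have : (⟨(i : ℕ), i.isLt⟩ : Fin k) = i := rfl
    rw [this, hidem]
  | succ n ih =>
    intro j i hji hn
    have hjk : j < k := lt_of_le_of_lt (by omega) i.isLt
    rw [sufFold, dif_pos hjk]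
    calc f i (f ⟨j, hjk⟩ (sufFold f (j + 1)))
        ≤ f ⟨j, hjk⟩ (f i (sufFold f (j + 1))) := hsemi i ⟨j, hjk⟩ (by simp only [Fin.lt_def]; omega) _
      _ ≤ f ⟨j, hjk⟩ (sufFold f (j + 1)) :=
          hmono _ (ih (j + 1) i (by omega) (by omega))

/-- Under the hypotheses of the Simple Iteration Lemma, `f 0 (f 1 (… f (k-1) ⊥))`
is a common fixpoint of all the functions `f i`. -/
theorem simple_iteration_common_fixpoint {D : Type*} [PartialOrder D] [OrderBot D]
    {k : ℕ} (f : Fin k → D → D)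
    (hinfl : ∀ i x, x ≤ f i x) (hmono : ∀ i, Monotone (f i))
    (hidem : ∀ i x, f i (f i x) = f i x)
    (hsemi : ∀ i j : Fin k, j < i → ∀ x, f i (f j x) ≤ f j (f i x)) :
    ∀ i, f i ((List.ofFn f).foldr (fun g x => g x) ⊥) =
        (List.ofFn f).foldr (fun g x => g x) ⊥ := by
  intro i
  have hfold : (List.ofFn f).foldr (fun g x => g x) ⊥ = sufFold f 0 := by
    simpa using sufFold_eq_foldr f 0
  rw [hfold]
  exact le_antisymm (sufFold_key f hmono hidem hsemi (i : ℕ) 0 i (Nat.zero_le _) (by omega))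
    (hinfl i _)
end

section
/- For any constraint C ⊆ E₁ × ⋯ × E_k and any i, j ∈ [1..k], the projection functions π_i and π_j associated with C commute: π_j(π_i(X₁,…,X_k)) = π_i(π_j(X₁,…,X_k)) for all tuples (X₁,…,X_k) of subsets of E₁,…,E_k. -/
/-! Projecting along `i` only removes values that no tuple of `C ∩ (X₁ × ⋯ × X_k)` uses, so it
does not change `C ∩ (X₁ × ⋯ × X_k)`. Hence `π_i ∘ π_j` and `π_j ∘ π_i` both overwrite the
`i`-th and `j`-th components of `X` by the projections of the same set, and such updates commute. -/

/-- The projection function `π_i` of a constraint `C`. -/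
def proj {k : ℕ} {E : Fin k → Type*} (C : Set (∀ j, E j)) (i : Fin k)
    (X : ∀ j, Set (E j)) : ∀ j, Set (E j) :=
  Function.update X i {a | ∃ d ∈ C ∩ Set.univ.pi X, d i = a}

section

variable {k : ℕ} {E : Fin k → Type*} (C : Set (∀ j, E j)) (i : Fin k) (X : ∀ j, Set (E j))

theorem proj_eq_update :
    proj C i X = Function.update X i (Function.eval i '' (C ∩ Set.univ.pi X)) :=
  rfl

theorem proj_apply_self : proj C i X i = Function.eval i '' (C ∩ Set.univ.pi X) := by
  rw [proj_eq_update, Function.update_self]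

theorem proj_apply_of_ne {j : Fin k} (h : j ≠ i) : proj C i X j = X j :=
  Function.update_of_ne h ..

theorem proj_apply_subset (j : Fin k) : proj C i X j ⊆ X j := by
  rcases eq_or_ne j i with rfl | h
  · rw [proj_apply_self]
    rintro _ ⟨d, ⟨-, hd⟩, rfl⟩
    exact hd j trivial
  · rw [proj_apply_of_ne C i X h]

theorem inter_pi_proj : C ∩ Set.univ.pi (proj C i X) = C ∩ Set.univ.pi X := by
  refine subset_antisymm (Set.inter_subset_inter_right C
    (Set.pi_mono fun j _ => proj_apply_subset C i X j)) fun d hd => ⟨hd.1, fun j _ => ?_⟩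
  rcases eq_or_ne j i with rfl | h
  · rw [proj_apply_self]
    exact ⟨d, hd, rfl⟩
  · rw [proj_apply_of_ne C i X h]
    exact hd.2 j trivial

theorem proj_proj (j : Fin k) :
    proj C i (proj C j X) =
      Function.update (proj C j X) i (Function.eval i '' (C ∩ Set.univ.pi X)) := by
  rw [proj_eq_update C i, inter_pi_proj]

end

/-- The projection functions `π_i` and `π_j` of a single constraint `C` commute. -/
theorem projections_commute {k : ℕ} {E : Fin k → Type*}
    (C : Set (∀ j, E j)) (i j : Fin k) :
    ∀ X : ∀ j, Set (E j), proj C i (proj C j X) = proj C j (proj C i X) := by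
  intro X
  rcases eq_or_ne i j with rfl | hij
  · rfl
  · rw [proj_proj, proj_proj, proj_eq_update C j, proj_eq_update C i]
    exact Function.update_comm hij.symm ..
end

section
/- In a standardized CSP with variables including x, y, z, u where x precedes y, the path-consistency functions f^z_{x,y} and f^u_{x,y} (which both modify the constraint on (x,y) using the constraints involving z, respectively u) commute, i.e., their canonic extensions satisfy (f^z_{x,y})⁺ ∘ (f^u_{x,y})⁺ = (f^u_{x,y})⁺ ∘ (f^z_{x,y})⁺. -/
/-- Composition of binary relations. -/
def rcomp {α : Type*} (R S : Set (α × α)) : Set (α × α) :=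
  {p | ∃ c, (p.1, c) ∈ R ∧ (c, p.2) ∈ S}

/-- Transpose of a binary relation. -/
def rtransp {α : Type*} (R : Set (α × α)) : Set (α × α) :=
  {p | (p.2, p.1) ∈ R}

/-- Canonic extension of the path-consistency function `f^z_{x,y}`: it modifies
only the constraint on `(x,y)` (and its supplementary transpose on `(y,x)`) of the
family `G`, intersecting it with `G x z · G z y`. -/
def pcApply {n : ℕ} {α : Type*} (G : Fin n → Fin n → Set (α × α)) (x y z : Fin n) :
    Fin n → Fin n → Set (α × α) :=
  fun a b =>
    if a = x ∧ b = y then G x y ∩ rcomp (G x z) (G z y)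
    else if a = y ∧ b = x then rtransp (G x y ∩ rcomp (G x z) (G z y))
    else G a b

lemma pcApply_other {n : ℕ} {α : Type*} (G : Fin n → Fin n → Set (α × α))
    (x y w a b : Fin n) (h : ¬(a = x ∧ b = y)) (h' : ¬(a = y ∧ b = x)) :
    pcApply G x y w a b = G a b := by
  simp only [pcApply, if_neg h, if_neg h']

lemma pcApply_xy {n : ℕ} {α : Type*} (G : Fin n → Fin n → Set (α × α))
    (x y w : Fin n) : pcApply G x y w x y = G x y ∩ rcomp (G x w) (G w y) :=
  if_pos ⟨rfl, rfl⟩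

lemma pcApply_yx {n : ℕ} {α : Type*} (G : Fin n → Fin n → Set (α × α))
    (x y w : Fin n) (hxy : x ≠ y) :
    pcApply G x y w y x = rtransp (G x y ∩ rcomp (G x w) (G w y)) := by
  rw [pcApply, if_neg (fun h => hxy h.1.symm), if_pos ⟨rfl, rfl⟩]

lemma pcApply_twice_xy {n : ℕ} {α : Type*} (G : Fin n → Fin n → Set (α × α))
    (x y z u : Fin n) (hxy : x ≠ y)
    (hzx : z ≠ x) (hzy : z ≠ y) (hux : u ≠ x) (huy : u ≠ y) :
    pcApply (pcApply G x y u) x y z x y =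
      G x y ∩ rcomp (G x u) (G u y) ∩ rcomp (G x z) (G z y) := by
  rw [pcApply_xy, pcApply_xy,
    pcApply_other G x y u x z (fun h => hzy h.2) (fun h => hxy h.1),
    pcApply_other G x y u z y (fun h => hzx h.1) (fun h => hzy h.1)]

/-- In a standardized CSP, the canonic extensions of the path-consistency functions
`f^z_{x,y}` and `f^u_{x,y}`, which both modify the constraint on `(x,y)`, commute. -/
theorem path_functions_commute {n : ℕ} {α : Type*}
    (G : Fin n → Fin n → Set (α × α))
    (hsym : ∀ a b, G b a = rtransp (G a b))
    (x y z u : Fin n) (hxy : x ≠ y)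
    (hzx : z ≠ x) (hzy : z ≠ y) (hux : u ≠ x) (huy : u ≠ y) :
    pcApply (pcApply G x y u) x y z = pcApply (pcApply G x y z) x y u := by
  have core : G x y ∩ rcomp (G x u) (G u y) ∩ rcomp (G x z) (G z y) =
      G x y ∩ rcomp (G x z) (G z y) ∩ rcomp (G x u) (G u y) := by
    rw [Set.inter_assoc, Set.inter_assoc, Set.inter_comm (rcomp (G x u) (G u y))]
  funext a b
  by_cases h1 : a = x ∧ b = y
  · obtain ⟨rfl, rfl⟩ := h1
    rw [pcApply_twice_xy G a b z u hxy hzx hzy hux huy,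
      pcApply_twice_xy G a b u z hxy hux huy hzx hzy, core]
  · by_cases h2 : a = y ∧ b = x
    · obtain ⟨rfl, rfl⟩ := h2
      rw [pcApply_yx _ b a z hxy, pcApply_yx _ b a u hxy,
        pcApply_xy, pcApply_xy,
        pcApply_other G b a u b z (fun h => hzy h.2) (fun h => hxy h.1),
        pcApply_other G b a u z a (fun h => hzx h.1) (fun h => hzy h.1),
        pcApply_other G b a z b u (fun h => huy h.2) (fun h => hxy h.1),
        pcApply_other G b a z u a (fun h => hux h.1) (fun h => huy h.1), core]
    · rw [pcApply_other (pcApply G x y u) x y z a b h1 h2,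
        pcApply_other G x y u a b h1 h2,
        pcApply_other (pcApply G x y z) x y u a b h1 h2,
        pcApply_other G x y z a b h1 h2]
end

section
/- Let C₁ be a binary constraint on variables (w,z) and C₂ a binary constraint on variables (x,y) of a CSP, where y = w (the second-listed variable of C₂ equals the first variable of C₁) and x, y, z are distinct with x before y before z. Then the π₁ function of C₁ semi-commutes with the π₁ function of C₂ w.r.t. the componentwise ordering ⊇: for all tuples (X₁,…,X_n), (π₁ of C₁)⁺((π₁ of C₂)⁺(X)) ⊇-componentwise (π₁ of C₂)⁺((π₁ of C₁)⁺(X)). -/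
/-!
The `π₁` function of `C₂` only rewrites the domain of `x`, which the `π₁` function of `C₁`
neither reads nor writes because `x ∉ {y, z}`. Hence the two composites agree away from `x`,
and at `x` applying `C₂` after `C₁` has shrunk the domain of `y` can only give less, by
monotonicity.
-/

/-- Canonic extension of the `π₁` function of a binary constraint `C` on the
variables `(p, q)`: it shrinks the domain of `p` using the domain of `q`. -/
def arcApply {n : ℕ} {D : Fin n → Type*} {p q : Fin n}
    (C : Set (D p × D q)) (X : ∀ v, Set (D v)) : ∀ v, Set (D v) :=
  Function.update X p {a ∈ X p | ∃ b ∈ X q, (a, b) ∈ C}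

section arcApply

variable {n : ℕ} {D : Fin n → Type*} {p q : Fin n} (C : Set (D p × D q))

theorem arcApply_apply_of_ne (X : ∀ v, Set (D v)) {v : Fin n} (hv : v ≠ p) :
    arcApply C X v = X v :=
  Function.update_of_ne hv _ _

theorem arcApply_le (X : ∀ v, Set (D v)) : arcApply C X ≤ X := by
  intro v
  rcases eq_or_ne v p with rfl | hv
  · simp only [arcApply, Function.update_self]
    exact Set.sep_subset _ _
  · exact (arcApply_apply_of_ne C X hv).le

theorem arcApply_mono : Monotone (arcApply C) := by
  intro X Y hXY v
  rcases eq_or_ne v p with rfl | hv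
  · simp only [arcApply, Function.update_self]
    rintro a ⟨ha, b, hb, hab⟩
    exact ⟨hXY _ ha, b, hXY _ hb, hab⟩
  · simpa only [arcApply_apply_of_ne C _ hv] using hXY v

theorem arcApply_update_of_ne (X : ∀ v, Set (D v)) {r : Fin n} (hrp : r ≠ p) (hrq : r ≠ q)
    (S : Set (D r)) :
    arcApply C (Function.update X r S) = Function.update (arcApply C X) r S := by
  simp only [arcApply, Function.update_of_ne hrp.symm, Function.update_of_ne hrq.symm]
  exact Function.update_comm hrp _ _ X

end arcApply

theorem arcApply_semicommute {n : ℕ} {D : Fin n → Type*} {x y z : Fin n}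
    (hxy : x ≠ y) (hxz : x ≠ z) (C₁ : Set (D y × D z)) (C₂ : Set (D x × D y))
    (X : ∀ v, Set (D v)) :
    arcApply C₂ (arcApply C₁ X) ≤ arcApply C₁ (arcApply C₂ X) := by
  intro v
  rcases eq_or_ne v x with rfl | hv
  · calc arcApply C₂ (arcApply C₁ X) v
        _ ⊆ arcApply C₂ X v := arcApply_mono C₂ (arcApply_le C₁ X) v
        _ = arcApply C₁ (arcApply C₂ X) v := (arcApply_apply_of_ne C₁ _ hxy).symm
  · change _ ⊆ arcApply C₁ (Function.update X x _) v
    rw [arcApply_apply_of_ne C₂ _ hv, arcApply_update_of_ne C₁ X hxy hxz,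
      Function.update_of_ne hv]

/-- Semi-commutativity Lemma: for a binary constraint `C₁` on `(y, z)` and a binary
constraint `C₂` on `(x, y)` with `x` before `y` before `z`, the `π₁` function of
`C₁` semi-commutes with the `π₁` function of `C₂` w.r.t. the componentwise
ordering `⊇`: each component of `(π₁C₁)⁺((π₁C₂)⁺(X))` contains the corresponding
component of `(π₁C₂)⁺((π₁C₁)⁺(X))`. -/
theorem arc_semi_commutativity {n : ℕ} {D : Fin n → Type*}
    (x y z : Fin n) (hxy : x < y) (hyz : y < z)
    (C₁ : Set (D y × D z)) (C₂ : Set (D x × D y)) :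
    ∀ X : ∀ v, Set (D v), ∀ v,
      arcApply C₂ (arcApply C₁ X) v ⊆ arcApply C₁ (arcApply C₂ X) v :=
  fun X => arcApply_semicommute hxy.ne (hxy.trans hyz).ne C₁ C₂ X
end
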